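/- arXiv:2110.08186 — 3 statements merged into one kernel-verified Lean document; each statement's English description precedes it below -/
import Mathlib

section
/- Strict bound preservation of the implicit scalar scheme: let ψ be a saturation with saturation level α such that γ = inf_{s ∈ [0,α)} (α − s)/(α·ψ(s)) > 0. Suppose ρ^n, ρ^{n+1} satisfy the implicit scheme relations with no-flux boundary conditions. If 0 < ρ_i^n < α for all 1 ≤ i ≤ M, then 0 < ρ_i^{n+1} < α for all 1 ≤ i ≤ M, with no restriction on Δt. -/
/-!
Both bounds come from sign information on the upwind flux alone, which is why no condition on
`Δt` is needed. A cell with `ρ ≥ α` has mobility `max (ψ ρ) 0 = 0`, so it receives nothing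
through either face; hence `ρⁿ⁺¹_i ≥ α` would force `ρⁿ⁺¹_i ≤ ρⁿ_i < α`. For positivity, sum the
scheme over the set of cells with `ρⁿ⁺¹ ≤ 0`: fluxes between two cells of the set cancel, and at
each face where the set meets a positive cell the flux points into the set, so the total of
`ρⁿ⁺¹` over the set is at least the total of `ρⁿ`, which is positive.
-/

/-- A *saturation* with saturation level `α > 0`: a continuous non-increasing function
`ψ : [0,∞) → ℝ` with `ψ α = 0` and `(α − s)·ψ s > 0` for every `s ≥ 0`, `s ≠ α`. -/
def IsSaturation (ψ : ℝ → ℝ) (α : ℝ) : Prop :=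
  0 < α ∧ ContinuousOn ψ (Set.Ici 0) ∧
    (∀ s₁ s₂, 0 ≤ s₁ → s₁ ≤ s₂ → ψ s₂ ≤ ψ s₁) ∧
    ψ α = 0 ∧ ∀ s, 0 ≤ s → s ≠ α → 0 < (α - s) * ψ s

/-- The CFL constant `γ = inf_{s ∈ [0,α)} (α − s)/(α·ψ s)`. -/
noncomputable def gammaCFL (ψ : ℝ → ℝ) (α : ℝ) : ℝ :=
  sInf ((fun s => (α - s) / (α * ψ s)) '' Set.Ico 0 α)

open Finset

noncomputable def upwindFlux (ψ : ℝ → ℝ) (ρl ρr u : ℝ) : ℝ :=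
  ρl * max (ψ ρr) 0 * max u 0 + ρr * max (ψ ρl) 0 * min u 0

lemma IsSaturation.nonpos_of_le {ψ : ℝ → ℝ} {α s : ℝ} (hψ : IsSaturation ψ α) (hs : α ≤ s) :
    ψ s ≤ 0 :=
  hψ.2.2.2.1 ▸ hψ.2.2.1 α s hψ.1.le hs

section upwindFlux

variable (ψ : ℝ → ℝ) {ρl ρr u : ℝ}

lemma upwindFlux_nonpos_of_nonpos_of_nonneg (hl : ρl ≤ 0) (hr : 0 ≤ ρr) :
    upwindFlux ψ ρl ρr u ≤ 0 := by
  unfold upwindFlux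
  have h₁ : ρl * max (ψ ρr) 0 * max u 0 ≤ 0 :=
    mul_nonpos_of_nonpos_of_nonneg
      (mul_nonpos_of_nonpos_of_nonneg hl (le_max_right _ _)) (le_max_right _ _)
  have h₂ : ρr * max (ψ ρl) 0 * min u 0 ≤ 0 :=
    mul_nonpos_of_nonneg_of_nonpos (mul_nonneg hr (le_max_right _ _)) (min_le_right _ _)
  linarith

lemma upwindFlux_nonneg_of_nonneg_of_nonpos (hl : 0 ≤ ρl) (hr : ρr ≤ 0) :
    0 ≤ upwindFlux ψ ρl ρr u := by
  unfold upwindFlux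
  have h₁ : 0 ≤ ρl * max (ψ ρr) 0 * max u 0 :=
    mul_nonneg (mul_nonneg hl (le_max_right _ _)) (le_max_right _ _)
  have h₂ : 0 ≤ ρr * max (ψ ρl) 0 * min u 0 :=
    mul_nonneg_of_nonpos_of_nonpos
      (mul_nonpos_of_nonpos_of_nonneg hr (le_max_right _ _)) (min_le_right _ _)
  linarith

lemma upwindFlux_nonneg_of_psi_left_nonpos (hl : 0 ≤ ρl) (hψ : ψ ρl ≤ 0) :
    0 ≤ upwindFlux ψ ρl ρr u := by
  simp only [upwindFlux, max_eq_right hψ, mul_zero, zero_mul, add_zero]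
  exact mul_nonneg (mul_nonneg hl (le_max_right _ _)) (le_max_right _ _)

lemma upwindFlux_nonpos_of_psi_right_nonpos (hr : 0 ≤ ρr) (hψ : ψ ρr ≤ 0) :
    upwindFlux ψ ρl ρr u ≤ 0 := by
  simp only [upwindFlux, max_eq_right hψ, mul_zero, zero_mul, zero_add]
  exact mul_nonpos_of_nonneg_of_nonpos (mul_nonneg hr (le_max_right _ _)) (min_le_right _ _)

end upwindFlux

section NetFlux

variable (p : ℕ → Prop) [DecidablePred p] {F : ℕ → ℝ} {M : ℕ}

lemma sum_Icc_ite_flux_sub_le (hF0 : F 0 = 0)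
    (hout : ∀ j, 1 ≤ j → j < M → p j → ¬ p (j + 1) → F j ≤ 0)
    (hin : ∀ j, 1 ≤ j → j < M → ¬ p j → p (j + 1) → 0 ≤ F j) :
    ∀ m ≤ M, ∑ j ∈ Icc 1 m, (if p j then F j - F (j - 1) else 0) ≤ if p m then F m else 0 := by
  intro m
  induction m with
  | zero => simp [hF0]
  | succ m ih =>
    intro hm
    rw [sum_Icc_succ_top (by omega), Nat.add_sub_cancel]
    have hface : (if p m then F m else 0) + (if p (m + 1) then F (m + 1) - F m else 0) ≤
        if p (m + 1) then F (m + 1) else 0 := by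
      rcases Nat.eq_zero_or_pos m with rfl | hm₀
      · split_ifs <;> simp [hF0]
      · by_cases hpm : p m <;> by_cases hpm₁ : p (m + 1) <;> simp only [hpm, hpm₁, if_true, if_false]
        · linarith
        · simpa using hout m hm₀ hm hpm hpm₁
        · simpa using hin m hm₀ hm hpm hpm₁
        · simp
    linarith [ih (by omega)]

lemma sum_filter_flux_sub_nonpos (hF0 : F 0 = 0) (hFM : F M = 0)
    (hout : ∀ j, 1 ≤ j → j < M → p j → ¬ p (j + 1) → F j ≤ 0)
    (hin : ∀ j, 1 ≤ j → j < M → ¬ p j → p (j + 1) → 0 ≤ F j) :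
    ∑ j ∈ (Icc 1 M).filter p, (F j - F (j - 1)) ≤ 0 := by
  rw [sum_filter]
  simpa [hFM] using sum_Icc_ite_flux_sub_le p hF0 hout hin M le_rfl

end NetFlux

section ImplicitUpwindScheme

variable {ψ : ℝ → ℝ} {τ : ℝ} {M : ℕ} {u ρ ρ' F : ℕ → ℝ}

lemma pos_of_implicit_upwind_scheme (hτ : 0 ≤ τ) (hF0 : F 0 = 0) (hFM : F M = 0)
    (hF : ∀ i, 1 ≤ i → i + 1 ≤ M → F i = upwindFlux ψ (ρ' i) (ρ' (i + 1)) (u i))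
    (hscheme : ∀ i, 1 ≤ i → i ≤ M → ρ' i = ρ i - τ * (F i - F (i - 1)))
    (hρ : ∀ i, 1 ≤ i → i ≤ M → 0 < ρ i) {i : ℕ} (hi : 1 ≤ i) (hiM : i ≤ M) : 0 < ρ' i := by
  by_contra! hi'
  set S := (Icc 1 M).filter (fun j => ρ' j ≤ 0)
  have hS : S.Nonempty := ⟨i, by simp [S, hi, hiM, hi']⟩
  have hmem : ∀ j ∈ S, 1 ≤ j ∧ j ≤ M ∧ ρ' j ≤ 0 := fun j hj => by
    simpa [S, and_assoc] using hj
  have hflux : ∑ j ∈ S, (F j - F (j - 1)) ≤ 0 :=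
    sum_filter_flux_sub_nonpos _ hF0 hFM
      (fun j hj hjM hneg hpos => hF j hj hjM ▸
        upwindFlux_nonpos_of_nonpos_of_nonneg ψ hneg (not_le.1 hpos).le)
      (fun j hj hjM hpos hneg => hF j hj hjM ▸
        upwindFlux_nonneg_of_nonneg_of_nonpos ψ (not_le.1 hpos).le hneg)
  have hmass : ∑ j ∈ S, ρ' j = ∑ j ∈ S, ρ j - τ * ∑ j ∈ S, (F j - F (j - 1)) := by
    rw [mul_sum, ← sum_sub_distrib]
    exact sum_congr rfl fun j hj => hscheme j (hmem j hj).1 (hmem j hj).2.1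
  have hnew : ∑ j ∈ S, ρ' j ≤ 0 := sum_nonpos fun j hj => (hmem j hj).2.2
  have hold : 0 < ∑ j ∈ S, ρ j := sum_pos (fun j hj => hρ j (hmem j hj).1 (hmem j hj).2.1) hS
  linarith [mul_nonpos_of_nonneg_of_nonpos hτ hflux]

lemma lt_of_implicit_upwind_scheme {α : ℝ} (hα : 0 ≤ α) (hsat : ∀ s, α ≤ s → ψ s ≤ 0)
    (hτ : 0 ≤ τ) (hF0 : F 0 = 0) (hFM : F M = 0)
    (hF : ∀ i, 1 ≤ i → i + 1 ≤ M → F i = upwindFlux ψ (ρ' i) (ρ' (i + 1)) (u i))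
    (hscheme : ∀ i, 1 ≤ i → i ≤ M → ρ' i = ρ i - τ * (F i - F (i - 1)))
    {i : ℕ} (hi : 1 ≤ i) (hiM : i ≤ M) (hρ : ρ i < α) : ρ' i < α := by
  by_contra! hαi
  have hpos : 0 ≤ ρ' i := hα.trans hαi
  have hright : 0 ≤ F i := by
    rcases hiM.lt_or_eq with hiM' | rfl
    · exact hF i hi hiM' ▸ upwindFlux_nonneg_of_psi_left_nonpos ψ hpos (hsat _ hαi)
    · exact hFM.ge
  have hleft : F (i - 1) ≤ 0 := by
    rcases hi.lt_or_eq with hi' | rfl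
    · have hface := hF (i - 1) (by omega) (by omega)
      rw [Nat.sub_add_cancel hi] at hface
      exact hface ▸ upwindFlux_nonpos_of_psi_right_nonpos ψ hpos (hsat _ hαi)
    · exact hF0.le
  linarith [hscheme i hi hiM, mul_nonneg hτ (sub_nonneg.2 (hleft.trans hright))]

end ImplicitUpwindScheme

/-- Here `u i` denotes `u_{i+1/2}` and `F i` denotes `F_{i+1/2}`. -/
theorem implicit_scalar_strict_bound_preservation_general
    (ψ : ℝ → ℝ) (α : ℝ) (hψ : IsSaturation ψ α)
    (Δx Δt : ℝ) (hΔx : 0 < Δx) (hΔt : 0 < Δt)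
    (M : ℕ)
    (u ρn ρn1 F : ℕ → ℝ)
    (hF0 : F 0 = 0) (hFM : F M = 0)
    (hFdef : ∀ i, 1 ≤ i → i + 1 ≤ M →
      F i = ρn1 i * max (ψ (ρn1 (i + 1))) 0 * max (u i) 0 +
        ρn1 (i + 1) * max (ψ (ρn1 i)) 0 * min (u i) 0)
    (hscheme : ∀ i, 1 ≤ i → i ≤ M →
      ρn1 i = ρn i - Δt / Δx * (F i - F (i - 1)))
    (hρn : ∀ i, 1 ≤ i → i ≤ M → 0 < ρn i ∧ ρn i < α) :
    ∀ i, 1 ≤ i → i ≤ M → 0 < ρn1 i ∧ ρn1 i < α := by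
  have hτ : 0 ≤ Δt / Δx := div_nonneg hΔt.le hΔx.le
  intro i hi hiM
  exact ⟨pos_of_implicit_upwind_scheme hτ hF0 hFM hFdef hscheme
      (fun j hj hjM => (hρn j hj hjM).1) hi hiM,
    lt_of_implicit_upwind_scheme hψ.1.le (fun _ => hψ.nonpos_of_le) hτ hF0 hFM hFdef hscheme
      hi hiM (hρn i hi hiM).2⟩

/-- Strict bound preservation of the implicit scalar scheme with no-flux boundary
conditions: here `u i` denotes `u_{i+1/2}` and `F i` denotes `F_{i+1/2}`. -/
theorem implicit_scalar_strict_bound_preservation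
    (ψ : ℝ → ℝ) (α : ℝ) (hψ : IsSaturation ψ α)
    (hγ : 0 < gammaCFL ψ α)
    (Δx Δt : ℝ) (hΔx : 0 < Δx) (hΔt : 0 < Δt)
    (M : ℕ) (hM : 1 ≤ M)
    (u ρn ρn1 F : ℕ → ℝ)
    (hF0 : F 0 = 0) (hFM : F M = 0)
    (hFdef : ∀ i, 1 ≤ i → i + 1 ≤ M →
      F i = ρn1 i * max (ψ (ρn1 (i + 1))) 0 * max (u i) 0 +
        ρn1 (i + 1) * max (ψ (ρn1 i)) 0 * min (u i) 0)
    (hscheme : ∀ i, 1 ≤ i → i ≤ M →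
      ρn1 i = ρn i - Δt / Δx * (F i - F (i - 1)))
    (hρn : ∀ i, 1 ≤ i → i ≤ M → 0 < ρn i ∧ ρn i < α) :
    ∀ i, 1 ≤ i → i ≤ M → 0 < ρn1 i ∧ ρn1 i < α :=
  implicit_scalar_strict_bound_preservation_general ψ α hψ Δx Δt hΔx hΔt M u ρn ρn1 F hF0 hFM hFdef
    hscheme hρn
end

section
/- Consider the explicit finite-volume scheme for a one-dimensional system of P species with saturation on the total density. Let ψ be a saturation with saturation level α, let γ = inf_{s ∈ [0,α)} (α − s)/(α·ψ(s)) and Γ = min{2/ψ(0), γ}, and assume the CFL condition Δt ≤ Γ·Δx/(4‖u‖). If ρ_i ≥ 0 entrywise and σ_i ≤ α for all i ∈ ℤ, then the updated values satisfy ρ_i' ≥ 0 entrywise and σ_i' := Σ_{p=1}^P (ρ_i')_p ≤ α for all i ∈ ℤ. -/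
/-- The minmod limiter. -/
noncomputable def minmod (a b c : ℝ) : ℝ :=
  if 0 < a ∧ 0 < b ∧ 0 < c then min a (min b c)
  else if a < 0 ∧ b < 0 ∧ c < 0 then max a (max b c)
  else 0

/-- Minmod mmSlope `(ρ_x)_i`. -/
noncomputable def mmSlope (θ Δx : ℝ) (ρ : ℤ → ℝ) (i : ℤ) : ℝ :=
  minmod (θ * (ρ (i + 1) - ρ i) / Δx) ((ρ (i + 1) - ρ (i - 1)) / (2 * Δx))
    (θ * (ρ i - ρ (i - 1)) / Δx)

/-- East reconstruction `ρ_i^E`. -/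
noncomputable def recE (θ Δx : ℝ) (ρ : ℤ → ℝ) (i : ℤ) : ℝ :=
  ρ i + Δx / 2 * mmSlope θ Δx ρ i

/-- West reconstruction `ρ_i^W`. -/
noncomputable def recW (θ Δx : ℝ) (ρ : ℤ → ℝ) (i : ℤ) : ℝ :=
  ρ i - Δx / 2 * mmSlope θ Δx ρ i


/-- Total density `σ_i = Σ_p (ρ_i)_p`. -/
noncomputable def totalDensity {P : ℕ} (ρ : ℤ → Fin P → ℝ) (i : ℤ) : ℝ :=
  ∑ p, ρ i p

/-- Entrywise east reconstruction `(ρ_i^E)_p`. -/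
noncomputable def recEV (θ Δx : ℝ) {P : ℕ} (ρ : ℤ → Fin P → ℝ) (i : ℤ) (p : Fin P) : ℝ :=
  recE θ Δx (fun j => ρ j p) i

/-- Entrywise west reconstruction `(ρ_i^W)_p`. -/
noncomputable def recWV (θ Δx : ℝ) {P : ℕ} (ρ : ℤ → Fin P → ℝ) (i : ℤ) (p : Fin P) : ℝ :=
  recW θ Δx (fun j => ρ j p) i

/-- Numerical flux `(F_{i+1/2})_p` of the explicit system scheme (with `θ = 2`);
`u i p` denotes `(u_{i+1/2})_p` and the saturation is evaluated on the reconstructions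
of the total density `σ`. -/
noncomputable def numFluxV (ψ : ℝ → ℝ) (Δx : ℝ) {P : ℕ} (ρ u : ℤ → Fin P → ℝ)
    (i : ℤ) (p : Fin P) : ℝ :=
  recEV 2 Δx ρ i p * ψ (recW 2 Δx (totalDensity ρ) (i + 1)) * max (u i p) 0 +
    recWV 2 Δx ρ (i + 1) p * ψ (recE 2 Δx (totalDensity ρ) i) * min (u i p) 0

/-- Updated cell values `(ρ_i')_p` of the explicit system scheme. -/
noncomputable def updateExplicitV (ψ : ℝ → ℝ) (Δx Δt : ℝ) {P : ℕ} (ρ u : ℤ → Fin P → ℝ)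
    (i : ℤ) (p : Fin P) : ℝ :=
  ρ i p - Δt / Δx * (numFluxV ψ Δx ρ u i p - numFluxV ψ Δx ρ u (i - 1) p)

section ExplicitSchemeHelpers

private lemma tri_bound' {a a' b b' c c' : ℝ} (ha : 0 ≤ a) (ha' : a ≤ a') (hb : 0 ≤ b)
    (hb' : b ≤ b') (hc : 0 ≤ c) (hc' : c ≤ c') : a * b * c ≤ a' * b' * c' :=
  mul_le_mul (mul_le_mul ha' hb' hb (ha.trans ha')) hc' hc
    (mul_nonneg (ha.trans ha') (hb.trans hb'))

private lemma rec_bounds' (Δx : ℝ) (hΔx : 0 < Δx) (ρ : ℤ → ℝ) (i : ℤ) :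
    (min (ρ i) (ρ (i+1)) ≤ recE 2 Δx ρ i ∧ recE 2 Δx ρ i ≤ max (ρ i) (ρ (i+1))) ∧
    (min (ρ (i-1)) (ρ i) ≤ recW 2 Δx ρ i ∧ recW 2 Δx ρ i ≤ max (ρ (i-1)) (ρ i)) := by
  have hΔx' : Δx ≠ 0 := ne_of_gt hΔx
  have hea : Δx / 2 * (2 * (ρ (i+1) - ρ i) / Δx) = ρ (i+1) - ρ i := by
    field_simp
  have hec : Δx / 2 * (2 * (ρ i - ρ (i-1)) / Δx) = ρ i - ρ (i-1) := by
    field_simp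
  unfold recE recW mmSlope minmod
  split_ifs with h1 h2
  · obtain ⟨hA, hB, hC⟩ := h1
    set m := min (2 * (ρ (i + 1) - ρ i) / Δx)
      (min ((ρ (i + 1) - ρ (i - 1)) / (2 * Δx)) (2 * (ρ i - ρ (i - 1)) / Δx)) with hm
    have hm0 : 0 ≤ m := le_min hA.le (le_min hB.le hC.le)
    have hma : m ≤ 2 * (ρ (i + 1) - ρ i) / Δx := min_le_left _ _
    have hmc : m ≤ 2 * (ρ i - ρ (i - 1)) / Δx := le_trans (min_le_right _ _) (min_le_right _ _)
    have h2a : Δx / 2 * m ≤ ρ (i+1) - ρ i :=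
      (mul_le_mul_of_nonneg_left hma (by positivity)).trans_eq hea
    have h2c : Δx / 2 * m ≤ ρ i - ρ (i-1) :=
      (mul_le_mul_of_nonneg_left hmc (by positivity)).trans_eq hec
    have h0 : 0 ≤ Δx / 2 * m := mul_nonneg (by positivity) hm0
    exact ⟨⟨le_trans (min_le_left _ _) (by linarith), le_trans (by linarith) (le_max_right _ _)⟩,
      ⟨le_trans (min_le_left _ _) (by linarith), le_trans (by linarith) (le_max_right _ _)⟩⟩
  · obtain ⟨hA, hB, hC⟩ := h2
    set m := max (2 * (ρ (i + 1) - ρ i) / Δx)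
      (max ((ρ (i + 1) - ρ (i - 1)) / (2 * Δx)) (2 * (ρ i - ρ (i - 1)) / Δx)) with hm
    have hm0 : m ≤ 0 := max_le hA.le (max_le hB.le hC.le)
    have hma : 2 * (ρ (i + 1) - ρ i) / Δx ≤ m := le_max_left _ _
    have hmc : 2 * (ρ i - ρ (i - 1)) / Δx ≤ m := le_trans (le_max_right _ _) (le_max_right _ _)
    have h2a : ρ (i+1) - ρ i ≤ Δx / 2 * m :=
      hea.symm.trans_le (mul_le_mul_of_nonneg_left hma (by positivity))
    have h2c : ρ i - ρ (i-1) ≤ Δx / 2 * m :=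
      hec.symm.trans_le (mul_le_mul_of_nonneg_left hmc (by positivity))
    have h0 : Δx / 2 * m ≤ 0 := by
      have := mul_le_mul_of_nonneg_left hm0 (le_of_lt (by positivity : (0:ℝ) < Δx / 2))
      simpa using this
    exact ⟨⟨le_trans (min_le_right _ _) (by linarith), le_trans (by linarith) (le_max_left _ _)⟩,
      ⟨le_trans (min_le_right _ _) (by linarith), le_trans (by linarith) (le_max_left _ _)⟩⟩
  · simp only [mul_zero, add_zero, sub_zero]
    exact ⟨⟨min_le_left _ _, le_max_left _ _⟩, ⟨min_le_right _ _, le_max_right _ _⟩⟩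

private lemma gamma_key' (ψ : ℝ → ℝ) (α : ℝ) (hψ : IsSaturation ψ α) :
    ∀ s, 0 ≤ s → s ≤ α → gammaCFL ψ α * (α * ψ s) ≤ α - s := by
  obtain ⟨hα, -, hmono, hψα, hpos⟩ := hψ
  intro s hs hsα
  rcases eq_or_lt_of_le hsα with h | h
  · rw [h, hψα]; simp
  · have hψs : 0 < ψ s := by
      have := hpos s hs (ne_of_lt h); nlinarith
    have hden : 0 < α * ψ s := mul_pos hα hψs
    have hbdd : BddBelow ((fun s => (α - s) / (α * ψ s)) '' Set.Ico 0 α) := by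
      refine ⟨0, ?_⟩
      rintro x ⟨t, ⟨ht0, htα⟩, rfl⟩
      have hψt : 0 < ψ t := by
        have := hpos t ht0 (ne_of_lt htα); nlinarith
      have : 0 < α * ψ t := mul_pos hα hψt
      exact div_nonneg (by linarith) this.le
    have hmem : (α - s) / (α * ψ s) ∈ ((fun s => (α - s) / (α * ψ s)) '' Set.Ico 0 α) :=
      ⟨s, ⟨hs, h⟩, rfl⟩
    have hle : gammaCFL ψ α ≤ (α - s) / (α * ψ s) := csInf_le hbdd hmem
    calc gammaCFL ψ α * (α * ψ s) ≤ (α - s) / (α * ψ s) * (α * ψ s) :=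
          mul_le_mul_of_nonneg_right hle hden.le
      _ = α - s := div_mul_cancel₀ _ hden.ne'

end ExplicitSchemeHelpers

/-- Boundedness and non-negativity of the explicit system scheme under the CFL condition
`Δt ≤ Γ·Δx/(4‖u‖)` with `Γ = min{2/ψ(0), γ}`; `U` is an upper bound for `‖u‖`. -/
theorem explicit_system_bound_preservation
    (ψ : ℝ → ℝ) (α : ℝ) (hψ : IsSaturation ψ α)
    (Δx Δt : ℝ) (hΔx : 0 < Δx) (hΔt : 0 < Δt)
    (P : ℕ) (ρ u : ℤ → Fin P → ℝ) (U : ℝ) (hU : 0 < U)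
    (hu : ∀ i p, |u i p| ≤ U)
    (hρ : ∀ i p, 0 ≤ ρ i p) (hσ : ∀ i, totalDensity ρ i ≤ α)
    (hCFL : Δt ≤ min (2 / ψ 0) (gammaCFL ψ α) * Δx / (4 * U)) :
    ∀ i, (∀ p, 0 ≤ updateExplicitV ψ Δx Δt ρ u i p) ∧
      (∑ p, updateExplicitV ψ Δx Δt ρ u i p) ≤ α := by
  obtain ⟨hα, -, hmono, hψα, hpos⟩ := id hψ
  intro i
  have hψ0pos : 0 < ψ 0 := by
    have h := hpos 0 le_rfl (ne_of_lt hα)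
    nlinarith
  have hσ0 : ∀ j, 0 ≤ totalDensity ρ j := fun j => Finset.sum_nonneg fun p _ => hρ j p
  have hψnn : ∀ s, 0 ≤ s → s ≤ α → 0 ≤ ψ s := fun s hs hsα => hψα ▸ hmono s α hs hsα
  have hψle : ∀ s, 0 ≤ s → ψ s ≤ ψ 0 := fun s hs => hmono 0 s le_rfl hs
  have hEσ : ∀ j, 0 ≤ recE 2 Δx (totalDensity ρ) j ∧ recE 2 Δx (totalDensity ρ) j ≤ α :=
    fun j => ⟨le_trans (le_min (hσ0 j) (hσ0 (j+1))) (rec_bounds' Δx hΔx _ j).1.1,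
      le_trans (rec_bounds' Δx hΔx _ j).1.2 (max_le (hσ j) (hσ (j+1)))⟩
  have hWσ : ∀ j, 0 ≤ recW 2 Δx (totalDensity ρ) j ∧ recW 2 Δx (totalDensity ρ) j ≤ α :=
    fun j => ⟨le_trans (le_min (hσ0 (j-1)) (hσ0 j)) (rec_bounds' Δx hΔx _ j).2.1,
      le_trans (rec_bounds' Δx hΔx _ j).2.2 (max_le (hσ (j-1)) (hσ j))⟩
  have hψE : ∀ j, 0 ≤ ψ (recE 2 Δx (totalDensity ρ) j) ∧
      ψ (recE 2 Δx (totalDensity ρ) j) ≤ ψ 0 :=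
    fun j => ⟨hψnn _ (hEσ j).1 (hEσ j).2, hψle _ (hEσ j).1⟩
  have hψW : ∀ j, 0 ≤ ψ (recW 2 Δx (totalDensity ρ) j) ∧
      ψ (recW 2 Δx (totalDensity ρ) j) ≤ ψ 0 :=
    fun j => ⟨hψnn _ (hWσ j).1 (hWσ j).2, hψle _ (hWσ j).1⟩
  have hEρ : ∀ j p, 0 ≤ recEV 2 Δx ρ j p ∧ recEV 2 Δx ρ j p ≤ ρ j p + ρ (j+1) p := by
    intro j p
    have h := (rec_bounds' Δx hΔx (fun k => ρ k p) j).1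
    exact ⟨le_trans (le_min (hρ j p) (hρ (j+1) p)) h.1,
      le_trans h.2 (max_le (le_add_of_nonneg_right (hρ _ _)) (le_add_of_nonneg_left (hρ _ _)))⟩
  have hWρ : ∀ j p, 0 ≤ recWV 2 Δx ρ j p ∧ recWV 2 Δx ρ j p ≤ ρ (j-1) p + ρ j p := by
    intro j p
    have h := (rec_bounds' Δx hΔx (fun k => ρ k p) j).2
    exact ⟨le_trans (le_min (hρ (j-1) p) (hρ j p)) h.1,
      le_trans h.2 (max_le (le_add_of_nonneg_right (hρ _ _)) (le_add_of_nonneg_left (hρ _ _)))⟩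
  have hEWsum : ∀ j p, recEV 2 Δx ρ j p + recWV 2 Δx ρ j p = 2 * ρ j p := by
    intro j p; simp only [recEV, recWV, recE, recW]; ring
  have hEWσsum : recE 2 Δx (totalDensity ρ) i + recW 2 Δx (totalDensity ρ) i =
      2 * totalDensity ρ i := by
    simp only [recE, recW]; ring
  have humax : ∀ j p, max (u j p) 0 ≤ U := fun j p => max_le (abs_le.mp (hu j p)).2 hU.le
  have humin : ∀ j p, -min (u j p) 0 ≤ U := by
    intro j p
    have h1 := (abs_le.mp (hu j p)).1
    have h2 : -U ≤ min (u j p) 0 := le_min h1 (by linarith)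
    linarith
  have humax0 : ∀ j p, 0 ≤ max (u j p) 0 := fun j p => le_max_right _ _
  have humin0 : ∀ j p, 0 ≤ -min (u j p) 0 := fun j p => neg_nonneg.mpr (min_le_right _ _)
  have hlam0 : 0 < Δt / Δx := div_pos hΔt hΔx
  have hM : Δt / Δx * (4 * U) ≤ min (2 / ψ 0) (gammaCFL ψ α) := by
    rw [show Δt / Δx * (4*U) = Δt * (4*U) / Δx by ring, div_le_iff₀ hΔx]
    have h4U : (0:ℝ) < 4 * U := by linarith
    have h1 := mul_le_mul_of_nonneg_right hCFL h4U.le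
    rwa [div_mul_cancel₀ _ h4U.ne'] at h1
  have hCFL1 : Δt / Δx * (2 * U * ψ 0) ≤ 1 := by
    have h1 := hM.trans (min_le_left _ _)
    have h2 := mul_le_mul_of_nonneg_right h1 hψ0pos.le
    rw [div_mul_cancel₀ _ hψ0pos.ne'] at h2
    nlinarith
  have hCFL2 : Δt / Δx * (4 * U) ≤ gammaCFL ψ α := hM.trans (min_le_right _ _)
  have hi1 : i - 1 + 1 = i := by ring
  have hupd : ∀ q : Fin P, updateExplicitV ψ Δx Δt ρ u i q =
      ρ i q - Δt / Δx *
        (recEV 2 Δx ρ i q * ψ (recW 2 Δx (totalDensity ρ) (i+1)) * max (u i q) 0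
        + recWV 2 Δx ρ (i+1) q * ψ (recE 2 Δx (totalDensity ρ) i) * min (u i q) 0
        - (recEV 2 Δx ρ (i-1) q * ψ (recW 2 Δx (totalDensity ρ) i) * max (u (i-1) q) 0
        + recWV 2 Δx ρ i q * ψ (recE 2 Δx (totalDensity ρ) (i-1)) * min (u (i-1) q) 0)) := by
    intro q
    simp only [updateExplicitV, numFluxV, hi1]
  constructor
  · intro p
    rw [hupd p]
    have hA : recEV 2 Δx ρ i p * ψ (recW 2 Δx (totalDensity ρ) (i+1)) * max (u i p) 0
        ≤ recEV 2 Δx ρ i p * ψ 0 * U :=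
      tri_bound' (hEρ i p).1 le_rfl (hψW (i+1)).1 (hψW (i+1)).2 (humax0 i p) (humax i p)
    have hB : recWV 2 Δx ρ (i+1) p * ψ (recE 2 Δx (totalDensity ρ) i) * min (u i p) 0 ≤ 0 := by
      have hnn : 0 ≤ recWV 2 Δx ρ (i+1) p * ψ (recE 2 Δx (totalDensity ρ) i) :=
        mul_nonneg (hWρ (i+1) p).1 (hψE i).1
      have := mul_le_mul_of_nonneg_left (min_le_right (u i p) 0) hnn
      simpa using this
    have hC : 0 ≤ recEV 2 Δx ρ (i-1) p * ψ (recW 2 Δx (totalDensity ρ) i) * max (u (i-1) p) 0 :=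
      mul_nonneg (mul_nonneg (hEρ (i-1) p).1 (hψW i).1) (humax0 _ _)
    have hD : -(recWV 2 Δx ρ i p * ψ (recE 2 Δx (totalDensity ρ) (i-1)) * min (u (i-1) p) 0)
        ≤ recWV 2 Δx ρ i p * ψ 0 * U := by
      calc -(recWV 2 Δx ρ i p * ψ (recE 2 Δx (totalDensity ρ) (i-1)) * min (u (i-1) p) 0)
          = recWV 2 Δx ρ i p * ψ (recE 2 Δx (totalDensity ρ) (i-1)) * (-min (u (i-1) p) 0) := by
            ring
        _ ≤ recWV 2 Δx ρ i p * ψ 0 * U :=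
            tri_bound' (hWρ i p).1 le_rfl (hψE (i-1)).1 (hψE (i-1)).2 (humin0 _ _) (humin _ _)
    have hsum := hEWsum i p
    have k1 : recEV 2 Δx ρ i p * ψ (recW 2 Δx (totalDensity ρ) (i+1)) * max (u i p) 0
        + recWV 2 Δx ρ (i+1) p * ψ (recE 2 Δx (totalDensity ρ) i) * min (u i p) 0
        - (recEV 2 Δx ρ (i-1) p * ψ (recW 2 Δx (totalDensity ρ) i) * max (u (i-1) p) 0
        + recWV 2 Δx ρ i p * ψ (recE 2 Δx (totalDensity ρ) (i-1)) * min (u (i-1) p) 0)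
        ≤ recEV 2 Δx ρ i p * ψ 0 * U + recWV 2 Δx ρ i p * ψ 0 * U := by linarith
    have k2 := mul_le_mul_of_nonneg_left k1 hlam0.le
    have k3 : Δt / Δx * (recEV 2 Δx ρ i p * ψ 0 * U + recWV 2 Δx ρ i p * ψ 0 * U)
        = Δt / Δx * (2 * U * ψ 0) * ρ i p := by
      linear_combination (Δt / Δx * ψ 0 * U) * hsum
    have k4 : Δt / Δx * (2 * U * ψ 0) * ρ i p ≤ 1 * ρ i p :=
      mul_le_mul_of_nonneg_right hCFL1 (hρ i p)
    have hρip := hρ i p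
    linarith
  · rw [Finset.sum_congr rfl fun q _ => hupd q]
    rw [Finset.sum_sub_distrib, ← Finset.mul_sum]
    have hsplit : (∑ q, (recEV 2 Δx ρ i q * ψ (recW 2 Δx (totalDensity ρ) (i+1)) * max (u i q) 0
        + recWV 2 Δx ρ (i+1) q * ψ (recE 2 Δx (totalDensity ρ) i) * min (u i q) 0
        - (recEV 2 Δx ρ (i-1) q * ψ (recW 2 Δx (totalDensity ρ) i) * max (u (i-1) q) 0
        + recWV 2 Δx ρ i q * ψ (recE 2 Δx (totalDensity ρ) (i-1)) * min (u (i-1) q) 0)))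
        = (∑ q, recEV 2 Δx ρ i q * ψ (recW 2 Δx (totalDensity ρ) (i+1)) * max (u i q) 0)
        + (∑ q, recWV 2 Δx ρ (i+1) q * ψ (recE 2 Δx (totalDensity ρ) i) * min (u i q) 0)
        - ((∑ q, recEV 2 Δx ρ (i-1) q * ψ (recW 2 Δx (totalDensity ρ) i) * max (u (i-1) q) 0)
        + (∑ q, recWV 2 Δx ρ i q * ψ (recE 2 Δx (totalDensity ρ) (i-1)) * min (u (i-1) q) 0)) := by
      rw [Finset.sum_sub_distrib, Finset.sum_add_distrib, Finset.sum_add_distrib]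
    rw [hsplit]
    have hSA : 0 ≤ ∑ q, recEV 2 Δx ρ i q * ψ (recW 2 Δx (totalDensity ρ) (i+1)) * max (u i q) 0 :=
      Finset.sum_nonneg fun q _ =>
        mul_nonneg (mul_nonneg (hEρ i q).1 (hψW (i+1)).1) (humax0 _ _)
    have hSD : (∑ q, recWV 2 Δx ρ i q * ψ (recE 2 Δx (totalDensity ρ) (i-1)) * min (u (i-1) q) 0)
        ≤ 0 := by
      refine Finset.sum_nonpos fun q _ => ?_
      have hnn : 0 ≤ recWV 2 Δx ρ i q * ψ (recE 2 Δx (totalDensity ρ) (i-1)) :=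
        mul_nonneg (hWρ i q).1 (hψE (i-1)).1
      have := mul_le_mul_of_nonneg_left (min_le_right (u (i-1) q) 0) hnn
      simpa using this
    have hSB : -(∑ q, recWV 2 Δx ρ (i+1) q * ψ (recE 2 Δx (totalDensity ρ) i) * min (u i q) 0)
        ≤ (totalDensity ρ i + totalDensity ρ (i+1)) * ψ (recE 2 Δx (totalDensity ρ) i) * U := by
      rw [← Finset.sum_neg_distrib]
      calc (∑ q, -(recWV 2 Δx ρ (i+1) q * ψ (recE 2 Δx (totalDensity ρ) i) * min (u i q) 0))
          ≤ ∑ q, (ρ i q + ρ (i+1) q) * ψ (recE 2 Δx (totalDensity ρ) i) * U := by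
            refine Finset.sum_le_sum fun q _ => ?_
            have hW' : recWV 2 Δx ρ (i+1) q ≤ ρ i q + ρ (i+1) q := by
              have h := (hWρ (i+1) q).2
              rwa [show i + 1 - 1 = i by ring] at h
            calc -(recWV 2 Δx ρ (i+1) q * ψ (recE 2 Δx (totalDensity ρ) i) * min (u i q) 0)
                = recWV 2 Δx ρ (i+1) q * ψ (recE 2 Δx (totalDensity ρ) i)
                  * (-min (u i q) 0) := by ring
              _ ≤ (ρ i q + ρ (i+1) q) * ψ (recE 2 Δx (totalDensity ρ) i) * U :=
                  tri_bound' (hWρ (i+1) q).1 hW' (hψE i).1 le_rfl (humin0 _ _) (humin _ _)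
        _ = (totalDensity ρ i + totalDensity ρ (i+1)) * ψ (recE 2 Δx (totalDensity ρ) i) * U := by
            rw [← Finset.sum_mul, ← Finset.sum_mul, Finset.sum_add_distrib]
            simp [totalDensity]
    have hSC : (∑ q, recEV 2 Δx ρ (i-1) q * ψ (recW 2 Δx (totalDensity ρ) i) * max (u (i-1) q) 0)
        ≤ (totalDensity ρ (i-1) + totalDensity ρ i) * ψ (recW 2 Δx (totalDensity ρ) i) * U := by
      calc (∑ q, recEV 2 Δx ρ (i-1) q * ψ (recW 2 Δx (totalDensity ρ) i) * max (u (i-1) q) 0)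
          ≤ ∑ q, (ρ (i-1) q + ρ i q) * ψ (recW 2 Δx (totalDensity ρ) i) * U := by
            refine Finset.sum_le_sum fun q _ => ?_
            have hE' : recEV 2 Δx ρ (i-1) q ≤ ρ (i-1) q + ρ i q := by
              have h := (hEρ (i-1) q).2
              rwa [hi1] at h
            exact tri_bound' (hEρ (i-1) q).1 hE' (hψW i).1 le_rfl (humax0 _ _) (humax _ _)
        _ = (totalDensity ρ (i-1) + totalDensity ρ i) * ψ (recW 2 Δx (totalDensity ρ) i) * U := by
            rw [← Finset.sum_mul, ← Finset.sum_mul, Finset.sum_add_distrib]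
            simp [totalDensity]
    have hgE := gamma_key' ψ α hψ _ (hEσ i).1 (hEσ i).2
    have hgW := gamma_key' ψ α hψ _ (hWσ i).1 (hWσ i).2
    have c1 : Δt / Δx * (4 * U) * (α * ψ (recE 2 Δx (totalDensity ρ) i))
        ≤ gammaCFL ψ α * (α * ψ (recE 2 Δx (totalDensity ρ) i)) :=
      mul_le_mul_of_nonneg_right hCFL2 (mul_nonneg hα.le (hψE i).1)
    have c2 : Δt / Δx * (4 * U) * (α * ψ (recW 2 Δx (totalDensity ρ) i))
        ≤ gammaCFL ψ α * (α * ψ (recW 2 Δx (totalDensity ρ) i)) :=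
      mul_le_mul_of_nonneg_right hCFL2 (mul_nonneg hα.le (hψW i).1)
    have eB : (totalDensity ρ i + totalDensity ρ (i+1)) * ψ (recE 2 Δx (totalDensity ρ) i) * U
        ≤ 2 * α * (ψ (recE 2 Δx (totalDensity ρ) i) * U) := by
      nlinarith [mul_nonneg (hψE i).1 hU.le, hσ i, hσ (i+1), hσ0 i, hσ0 (i+1)]
    have eC : (totalDensity ρ (i-1) + totalDensity ρ i) * ψ (recW 2 Δx (totalDensity ρ) i) * U
        ≤ 2 * α * (ψ (recW 2 Δx (totalDensity ρ) i) * U) := by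
      nlinarith [mul_nonneg (hψW i).1 hU.le, hσ (i-1), hσ i, hσ0 (i-1), hσ0 i]
    have dB : Δt / Δx
        * -(∑ q, recWV 2 Δx ρ (i+1) q * ψ (recE 2 Δx (totalDensity ρ) i) * min (u i q) 0)
        ≤ (α - recE 2 Δx (totalDensity ρ) i) / 2 := by
      have s1 := mul_le_mul_of_nonneg_left (hSB.trans eB) hlam0.le
      linarith [s1, c1, hgE]
    have dC : Δt / Δx
        * (∑ q, recEV 2 Δx ρ (i-1) q * ψ (recW 2 Δx (totalDensity ρ) i) * max (u (i-1) q) 0)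
        ≤ (α - recW 2 Δx (totalDensity ρ) i) / 2 := by
      have s1 := mul_le_mul_of_nonneg_left (hSC.trans eC) hlam0.le
      linarith [s1, c2, hgW]
    have hlamSA : 0 ≤ Δt / Δx
        * ∑ q, recEV 2 Δx ρ i q * ψ (recW 2 Δx (totalDensity ρ) (i+1)) * max (u i q) 0 :=
      mul_nonneg hlam0.le hSA
    have hlamSD : Δt / Δx
        * ∑ q, recWV 2 Δx ρ i q * ψ (recE 2 Δx (totalDensity ρ) (i-1)) * min (u (i-1) q) 0
        ≤ 0 := by
      have := mul_le_mul_of_nonneg_left hSD hlam0.le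
      simpa using this
    have hσi : (∑ q, ρ i q) = totalDensity ρ i := rfl
    linarith [hlamSA, hlamSD, dB, dC, hEWσsum, hσ0 i, hσ i]
end

section
/- Upper bound for the explicit system scheme: let ψ be a saturation with saturation level α and let γ = inf_{s ∈ [0,α)} (α − s)/(α·ψ(s)). If ρ_i ≥ 0 entrywise and σ_i ≤ α for all i ∈ ℤ, and Δt ≤ γ·Δx/(4‖u‖), then the updated values satisfy σ_i' := Σ_{p=1}^P (ρ_i')_p ≤ α for all i ∈ ℤ. -/
/-!
The minmod reconstructions stay between neighbouring cell values, so every reconstructed total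
density lies in `[0, α]` and `ψ ≥ 0` there. Hence the flux sum through the east face of cell `i`
is at least `-2αUψ(σᵢᴱ)` and the one through its west face at most `2αUψ(σᵢᵂ)`. Under the CFL
condition the total density therefore grows by at most `(γα/2)(ψ(σᵢᴱ) + ψ(σᵢᵂ))`, and the
definition of `γ` gives `γαψ(s) ≤ α - s`; since `σᵢᴱ + σᵢᵂ = 2σᵢ`, the growth is at most `α - σᵢ`.
-/

open Set

theorem minmod_mem_uIcc_zero_left (a b c : ℝ) : minmod a b c ∈ uIcc 0 a := by
  unfold minmod
  split_ifs with hpos hneg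
  · exact mem_uIcc.2 (Or.inl ⟨(lt_min hpos.1 (lt_min hpos.2.1 hpos.2.2)).le, min_le_left _ _⟩)
  · exact mem_uIcc.2 (Or.inr ⟨le_max_left _ _, (max_lt hneg.1 (max_lt hneg.2.1 hneg.2.2)).le⟩)
  · exact left_mem_uIcc

theorem minmod_mem_uIcc_zero_right (a b c : ℝ) : minmod a b c ∈ uIcc 0 c := by
  unfold minmod
  split_ifs with hpos hneg
  · exact mem_uIcc.2 (Or.inl ⟨(lt_min hpos.1 (lt_min hpos.2.1 hpos.2.2)).le,
      (min_le_right _ _).trans (min_le_right _ _)⟩)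
  · exact mem_uIcc.2 (Or.inr ⟨(le_max_right _ _).trans (le_max_right _ _),
      (max_lt hneg.1 (max_lt hneg.2.1 hneg.2.2)).le⟩)
  · exact left_mem_uIcc

theorem half_mul_mem_uIcc_zero {θ h m d : ℝ} (hθ : 0 < θ) (hθ2 : θ ≤ 2) (hh : 0 < h)
    (hm : m ∈ uIcc 0 (θ * d / h)) : h / 2 * m ∈ uIcc 0 d := by
  rw [mem_uIcc, le_div_iff₀ hh, div_le_iff₀ hh] at hm
  rw [mem_uIcc]
  rcases hm with ⟨hm0, hmd⟩ | ⟨hmd, hm0⟩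
  · have hd : 0 ≤ d := by nlinarith
    exact Or.inl ⟨by positivity, by nlinarith⟩
  · have hd : d ≤ 0 := by nlinarith
    exact Or.inr ⟨by nlinarith, by nlinarith⟩

section Reconstruction

variable {θ Δx : ℝ} (hθ : 0 < θ) (hθ2 : θ ≤ 2) (hΔx : 0 < Δx)
include hθ hθ2 hΔx

theorem recE_mem_uIcc (ρ : ℤ → ℝ) (i : ℤ) : recE θ Δx ρ i ∈ uIcc (ρ i) (ρ (i + 1)) := by
  have h := half_mul_mem_uIcc_zero hθ hθ2 hΔx (minmod_mem_uIcc_zero_left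
    (θ * (ρ (i + 1) - ρ i) / Δx) ((ρ (i + 1) - ρ (i - 1)) / (2 * Δx)) (θ * (ρ i - ρ (i - 1)) / Δx))
  rw [mem_uIcc] at h ⊢
  unfold recE mmSlope
  rcases h with h | h
  · exact Or.inl ⟨by linarith, by linarith⟩
  · exact Or.inr ⟨by linarith, by linarith⟩

theorem recW_mem_uIcc (ρ : ℤ → ℝ) (i : ℤ) : recW θ Δx ρ i ∈ uIcc (ρ (i - 1)) (ρ i) := by
  have h := half_mul_mem_uIcc_zero hθ hθ2 hΔx (minmod_mem_uIcc_zero_right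
    (θ * (ρ (i + 1) - ρ i) / Δx) ((ρ (i + 1) - ρ (i - 1)) / (2 * Δx)) (θ * (ρ i - ρ (i - 1)) / Δx))
  rw [mem_uIcc] at h ⊢
  unfold recW mmSlope
  rcases h with h | h
  · exact Or.inl ⟨by linarith, by linarith⟩
  · exact Or.inr ⟨by linarith, by linarith⟩

theorem recE_mem {S : Set ℝ} (hS : S.OrdConnected) {ρ : ℤ → ℝ} (hρ : ∀ j, ρ j ∈ S) (i : ℤ) :
    recE θ Δx ρ i ∈ S :=
  hS.uIcc_subset (hρ i) (hρ (i + 1)) (recE_mem_uIcc hθ hθ2 hΔx ρ i)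

theorem recW_mem {S : Set ℝ} (hS : S.OrdConnected) {ρ : ℤ → ℝ} (hρ : ∀ j, ρ j ∈ S) (i : ℤ) :
    recW θ Δx ρ i ∈ S :=
  hS.uIcc_subset (hρ (i - 1)) (hρ i) (recW_mem_uIcc hθ hθ2 hΔx ρ i)

end Reconstruction

theorem recE_add_recW (θ Δx : ℝ) (ρ : ℤ → ℝ) (i : ℤ) :
    recE θ Δx ρ i + recW θ Δx ρ i = 2 * ρ i := by
  unfold recE recW; ring

theorem mem_Icc_add_of_nonneg {a b x : ℝ} (ha : 0 ≤ a) (hb : 0 ≤ b) (hx : x ∈ uIcc a b) :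
    x ∈ Icc 0 (a + b) :=
  ordConnected_Icc.uIcc_subset ⟨ha, by linarith⟩ ⟨hb, by linarith⟩ hx

namespace IsSaturation

variable {ψ : ℝ → ℝ} {α s : ℝ}

theorem nonneg (hψ : IsSaturation ψ α) (hs : s ∈ Icc 0 α) : 0 ≤ ψ s :=
  hψ.2.2.2.1 ▸ hψ.2.2.1 s α hs.1 hs.2

theorem pos (hψ : IsSaturation ψ α) (hs0 : 0 ≤ s) (hsα : s < α) : 0 < ψ s :=
  pos_of_mul_pos_right (hψ.2.2.2.2 s hs0 hsα.ne) (sub_pos.2 hsα).le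

theorem gammaCFL_mul_le (hψ : IsSaturation ψ α) (hs : s ∈ Icc 0 α) :
    gammaCFL ψ α * (α * ψ s) ≤ α - s := by
  rcases hs.2.eq_or_lt with rfl | hsα
  · simp [hψ.2.2.2.1]
  have hden : 0 < α * ψ s := mul_pos hψ.1 (hψ.pos hs.1 hsα)
  have hbdd : BddBelow ((fun s => (α - s) / (α * ψ s)) '' Ico 0 α) := by
    refine ⟨0, ?_⟩
    rintro _ ⟨t, ⟨ht0, htα⟩, rfl⟩
    exact div_nonneg (sub_nonneg.2 htα.le) (mul_pos hψ.1 (hψ.pos ht0 htα)).le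
  calc gammaCFL ψ α * (α * ψ s) ≤ (α - s) / (α * ψ s) * (α * ψ s) :=
        mul_le_mul_of_nonneg_right (csInf_le hbdd ⟨s, ⟨hs.1, hsα⟩, rfl⟩) hden.le
    _ = α - s := div_mul_cancel₀ _ hden.ne'

end IsSaturation

theorem sum_updateExplicitV (ψ : ℝ → ℝ) (Δx Δt : ℝ) {P : ℕ} (ρ u : ℤ → Fin P → ℝ) (i : ℤ) :
    ∑ p, updateExplicitV ψ Δx Δt ρ u i p = totalDensity ρ i -
      Δt / Δx * (∑ p, numFluxV ψ Δx ρ u i p - ∑ p, numFluxV ψ Δx ρ u (i - 1) p) := by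
  simp only [updateExplicitV, totalDensity, Finset.sum_sub_distrib, ← Finset.mul_sum]

section Flux

variable {ψ : ℝ → ℝ} {α Δx U : ℝ} {P : ℕ} {ρ u : ℤ → Fin P → ℝ}
  (hψ : IsSaturation ψ α) (hΔx : 0 < Δx) (hρ : ∀ i p, 0 ≤ ρ i p)
  (hσ : ∀ i, totalDensity ρ i ≤ α) (hu : ∀ i p, |u i p| ≤ U)

include hρ hσ in
theorem totalDensity_mem_Icc (i : ℤ) : totalDensity ρ i ∈ Icc 0 α :=
  ⟨Finset.sum_nonneg fun p _ => hρ i p, hσ i⟩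

include hψ hΔx hρ hσ hu

theorem neg_le_numFluxV (i : ℤ) (p : Fin P) :
    -(U * ψ (recE 2 Δx (totalDensity ρ) i) * (ρ i p + ρ (i + 1) p)) ≤
      numFluxV ψ Δx ρ u i p := by
  have hσ' := totalDensity_mem_Icc hρ hσ
  have hE : 0 ≤ recEV 2 Δx ρ i p :=
    recE_mem two_pos le_rfl hΔx ordConnected_Ici (fun j => hρ j p) i
  have hW : recWV 2 Δx ρ (i + 1) p ∈ Icc 0 (ρ i p + ρ (i + 1) p) := by
    have h := recW_mem_uIcc two_pos le_rfl hΔx (fun j => ρ j p) (i + 1)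
    rw [add_sub_cancel_right] at h
    exact mem_Icc_add_of_nonneg (hρ i p) (hρ (i + 1) p) h
  have hψW := hψ.nonneg (recW_mem two_pos le_rfl hΔx ordConnected_Icc hσ' (i + 1))
  have hψE := hψ.nonneg (recE_mem two_pos le_rfl hΔx ordConnected_Icc hσ' i)
  have hmin : -U ≤ min (u i p) 0 :=
    le_min (neg_le_of_abs_le (hu i p)) (neg_nonpos.2 ((abs_nonneg _).trans (hu i p)))
  unfold numFluxV
  linarith [mul_nonneg (mul_nonneg hE hψW) (le_max_right (u i p) 0),
    mul_nonneg (mul_nonneg hW.1 hψE) (neg_le_iff_add_nonneg.1 hmin),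
    mul_nonneg (mul_nonneg ((abs_nonneg _).trans (hu i p)) hψE) (sub_nonneg.2 hW.2)]

theorem numFluxV_le (i : ℤ) (p : Fin P) :
    numFluxV ψ Δx ρ u i p ≤
      U * ψ (recW 2 Δx (totalDensity ρ) (i + 1)) * (ρ i p + ρ (i + 1) p) := by
  have hσ' := totalDensity_mem_Icc hρ hσ
  have hE : recEV 2 Δx ρ i p ∈ Icc 0 (ρ i p + ρ (i + 1) p) :=
    mem_Icc_add_of_nonneg (hρ i p) (hρ (i + 1) p)
      (recE_mem_uIcc two_pos le_rfl hΔx (fun j => ρ j p) i)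
  have hW : 0 ≤ recWV 2 Δx ρ (i + 1) p :=
    recW_mem two_pos le_rfl hΔx ordConnected_Ici (fun j => hρ j p) (i + 1)
  have hψW := hψ.nonneg (recW_mem two_pos le_rfl hΔx ordConnected_Icc hσ' (i + 1))
  have hψE := hψ.nonneg (recE_mem two_pos le_rfl hΔx ordConnected_Icc hσ' i)
  have hmax : max (u i p) 0 ≤ U :=
    max_le (le_of_abs_le (hu i p)) ((abs_nonneg _).trans (hu i p))
  unfold numFluxV
  linarith [mul_nonneg (mul_nonneg hE.1 hψW) (sub_nonneg.2 hmax),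
    mul_nonneg (mul_nonneg hE.1 hψW) (le_max_right (u i p) 0),
    mul_nonneg (mul_nonneg ((abs_nonneg _).trans (hu i p)) hψW) (sub_nonneg.2 hE.2),
    mul_nonneg (mul_nonneg hW hψE) (neg_nonneg.2 (min_le_right (u i p) 0))]

theorem neg_le_sum_numFluxV (hU : 0 ≤ U) (i : ℤ) :
    -(2 * α * U * ψ (recE 2 Δx (totalDensity ρ) i)) ≤ ∑ p, numFluxV ψ Δx ρ u i p := by
  have hψE := hψ.nonneg
    (recE_mem two_pos le_rfl hΔx ordConnected_Icc (totalDensity_mem_Icc hρ hσ) i)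
  have hsum : ∑ p, -(U * ψ (recE 2 Δx (totalDensity ρ) i) * (ρ i p + ρ (i + 1) p)) =
      -(U * ψ (recE 2 Δx (totalDensity ρ) i) * (totalDensity ρ i + totalDensity ρ (i + 1))) := by
    simp only [totalDensity, Finset.sum_neg_distrib, ← Finset.mul_sum, Finset.sum_add_distrib]
  calc -(2 * α * U * ψ (recE 2 Δx (totalDensity ρ) i))
      ≤ -(U * ψ (recE 2 Δx (totalDensity ρ) i) * (totalDensity ρ i + totalDensity ρ (i + 1))) := by
        nlinarith [mul_nonneg hU hψE, hσ i, hσ (i + 1)]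
    _ ≤ ∑ p, numFluxV ψ Δx ρ u i p :=
        hsum ▸ Finset.sum_le_sum fun p _ => neg_le_numFluxV hψ hΔx hρ hσ hu i p

theorem sum_numFluxV_le (hU : 0 ≤ U) (i : ℤ) :
    ∑ p, numFluxV ψ Δx ρ u i p ≤ 2 * α * U * ψ (recW 2 Δx (totalDensity ρ) (i + 1)) := by
  have hψW := hψ.nonneg
    (recW_mem two_pos le_rfl hΔx ordConnected_Icc (totalDensity_mem_Icc hρ hσ) (i + 1))
  calc ∑ p, numFluxV ψ Δx ρ u i p
      ≤ ∑ p, U * ψ (recW 2 Δx (totalDensity ρ) (i + 1)) * (ρ i p + ρ (i + 1) p) :=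
        Finset.sum_le_sum fun p _ => numFluxV_le hψ hΔx hρ hσ hu i p
    _ = U * ψ (recW 2 Δx (totalDensity ρ) (i + 1)) * (totalDensity ρ i + totalDensity ρ (i + 1)) := by
        simp only [totalDensity, ← Finset.mul_sum, Finset.sum_add_distrib]
    _ ≤ 2 * α * U * ψ (recW 2 Δx (totalDensity ρ) (i + 1)) := by
        nlinarith [mul_nonneg hU hψW, hσ i, hσ (i + 1)]

end Flux

/-- Upper bound of the explicit system scheme under the CFL condition
`Δt ≤ γ·Δx/(4‖u‖)`; `U` is an upper bound for `‖u‖`. -/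
theorem explicit_system_upper_bound
    (ψ : ℝ → ℝ) (α : ℝ) (hψ : IsSaturation ψ α)
    (Δx Δt : ℝ) (hΔx : 0 < Δx) (hΔt : 0 < Δt)
    (P : ℕ) (ρ u : ℤ → Fin P → ℝ) (U : ℝ) (hU : 0 < U)
    (hu : ∀ i p, |u i p| ≤ U)
    (hρ : ∀ i p, 0 ≤ ρ i p) (hσ : ∀ i, totalDensity ρ i ≤ α)
    (hCFL : Δt ≤ gammaCFL ψ α * Δx / (4 * U)) :
    ∀ i, (∑ p, updateExplicitV ψ Δx Δt ρ u i p) ≤ α := by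
  intro i
  have hσ' := totalDensity_mem_Icc hρ hσ
  have hE := recE_mem two_pos le_rfl hΔx ordConnected_Icc hσ' i
  have hW := recW_mem two_pos le_rfl hΔx ordConnected_Icc hσ' i
  have hl : 0 ≤ Δt / Δx := by positivity
  have hlU : Δt / Δx * U ≤ gammaCFL ψ α / 4 := by
    rw [le_div_iff₀ (by positivity)] at hCFL
    rw [div_mul_eq_mul_div, div_le_div_iff₀ hΔx four_pos]
    linarith
  have hA := neg_le_sum_numFluxV hψ hΔx hρ hσ hu hU.le i
  have hB := sum_numFluxV_le hψ hΔx hρ hσ hu hU.le (i - 1)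
  rw [sub_add_cancel] at hB
  rw [sum_updateExplicitV]
  linarith [mul_le_mul_of_nonneg_left (add_le_add hA (neg_le_neg hB)) hl,
    mul_le_mul_of_nonneg_right hlU
      (mul_nonneg hψ.1.le (add_nonneg (hψ.nonneg hE) (hψ.nonneg hW))),
    hψ.gammaCFL_mul_le hE, hψ.gammaCFL_mul_le hW, recE_add_recW 2 Δx (totalDensity ρ) i]
end
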